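/- The function u_{1001}(x,t) = e^{−2it} (1 + 1/(x − 2it)) satisfies the nonlocal NLS equation i u_t(x,t) = u_xx(x,t) + 2 u(x,t)^2 u*(−x,t) at every real point (x,t) ≠ (0,0). -/

import Mathlib

open scoped BigOperators

/-- Schur polynomials with values in a commutative `ℂ`-algebra, defined by the explicit
partition-sum formula `S_k(x) = Σ_{l₁+2l₂+⋯+k·l_k = k} ∏_{i=1}^k x_i^{l_i}/l_i!`
coming from the generating function `Σ_k S_k(x) ε^k = exp(Σ_{j≥1} x_j ε^j)`. -/
noncomputable def schurA {A : Type*} [CommRing A] [Algebra ℂ A] (x : ℕ → A) (k : ℕ) : A :=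
  ∑ l ∈ Finset.filter
      (fun l : Fin k → Fin (k + 1) => ∑ i : Fin k, ((i : ℕ) + 1) * (l i : ℕ) = k) Finset.univ,
    ∏ i : Fin k,
      algebraMap ℂ A (((l i : ℕ).factorial : ℂ))⁻¹ * x ((i : ℕ) + 1) ^ (l i : ℕ)

/-- The complex-valued Schur polynomial `S_k(x)`. -/
noncomputable def schurC (x : ℕ → ℂ) (k : ℕ) : ℂ := schurA x k

/-- Schur polynomial with integer index, with the convention `S_k ≡ 0` for `k < 0`. -/
noncomputable def schurZ (x : ℕ → ℂ) (k : ℤ) : ℂ := if 0 ≤ k then schurC x k.toNat else 0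

/-- The function `λ ↦ ln((2/λ) tanh(λ/2))`, extended by the value `0` at `λ = 0`. -/
noncomputable def fS (lam : ℂ) : ℂ :=
  if lam = 0 then 0 else Complex.log (2 / lam * Complex.tanh (lam / 2))

/-- The Taylor coefficients `s_k` of `ln((2/λ) tanh(λ/2))` at `λ = 0`. -/
noncomputable def sCoeff (k : ℕ) : ℂ := iteratedDeriv k fS 0 / (k.factorial : ℂ)

/-- The sequence `x⁺(n) = (x₁⁺, 0, x₃⁺, 0, …)` with `x₁⁺(n) = x - 2it + n + a₁` and
`x⁺_{2k+1} = (x - 2^{2k+1} i t)/(2k+1)! + a_{2k+1}`. -/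
noncomputable def xPlus (a : ℕ → ℂ) (x t : ℝ) (n : ℕ) : ℕ → ℂ := fun m =>
  if m = 1 then (x : ℂ) - 2 * Complex.I * (t : ℂ) + (n : ℂ) + a 1
  else if m % 2 = 1 then ((x : ℂ) - 2 ^ m * Complex.I * (t : ℂ)) / (m.factorial : ℂ) + a m
  else 0

/-- The sequence `x⁻(n) = (x₁⁻, 0, x₃⁻, 0, …)` with `x₁⁻(n) = x + 2it - n + b₁` and
`x⁻_{2k+1} = (x + 2^{2k+1} i t)/(2k+1)! + b_{2k+1}`. -/
noncomputable def xMinus (b : ℕ → ℂ) (x t : ℝ) (n : ℕ) : ℕ → ℂ := fun m =>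
  if m = 1 then (x : ℂ) + 2 * Complex.I * (t : ℂ) - (n : ℂ) + b 1
  else if m % 2 = 1 then ((x : ℂ) + 2 ^ m * Complex.I * (t : ℂ)) / (m.factorial : ℂ) + b m
  else 0

/-- The matrix element `m_{i,j} = Σ_{v=0}^{min(i,j)} 4^{-v} S_{i-v}(x⁺ + v s) S_{j-v}(x⁻ + v s)`. -/
noncomputable def mGen (xp xm s : ℕ → ℂ) (i j : ℕ) : ℂ :=
  ∑ v ∈ Finset.range (min i j + 1),
    ((4 : ℂ) ^ v)⁻¹ * schurC (fun m => xp m + (v : ℂ) * s m) (i - v) *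
      schurC (fun m => xm m + (v : ℂ) * s m) (j - v)

/-- The τ-function `σ_n`: determinant of the 2×2 block matrix with blocks
`Γ_{i,j}^{(n)} = (m_{2k-i,2l-j}^{(n)})`. -/
noncomputable def sigmaTau (N₁ N₂ M₁ M₂ : ℕ) (a b : ℕ → ℂ) (n : ℕ) (x t : ℝ) : ℂ :=
  Matrix.det (Matrix.of fun r c : Fin (N₁ + N₂) =>
    mGen (xPlus a x t n) (xMinus b x t n) sCoeff
      (if (r : ℕ) < N₁ then 2 * (r : ℕ) + 1 else 2 * ((r : ℕ) - N₁))
      (if (c : ℕ) < M₁ then 2 * (c : ℕ) + 1 else 2 * ((c : ℕ) - M₁)))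

/-- The rational solution `u_{N₁,N₂,M₁,M₂}(x,t) = e^{-2it} σ₁/σ₀`. -/
noncomputable def uSol (N₁ N₂ M₁ M₂ : ℕ) (a b : ℕ → ℂ) (x t : ℝ) : ℂ :=
  Complex.exp (-2 * Complex.I * (t : ℂ)) *
    sigmaTau N₁ N₂ M₁ M₂ a b 1 x t / sigmaTau N₁ N₂ M₁ M₂ a b 0 x t

/-- The nonlocal NLS equation `i u_t(x,t) = u_xx(x,t) + 2 u(x,t)² u*(-x,t)` at the point `(x,t)`. -/
def nlnls (u : ℝ → ℝ → ℂ) (x t : ℝ) : Prop :=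
  Complex.I * deriv (fun s : ℝ => u x s) t =
    deriv (fun y : ℝ => deriv (fun w : ℝ => u w t) y) x +
      2 * u x t ^ 2 * (starRingEnd ℂ) (u (-x) t)

/-- `u_{0110}(x,t) = e^{-2it}(1 - 1/(x + 2it))`. -/
noncomputable def u0110 (x t : ℝ) : ℂ :=
  Complex.exp (-2 * Complex.I * (t : ℂ)) * (1 - 1 / ((x : ℂ) + 2 * Complex.I * (t : ℂ)))

/-- `u_{1001}(x,t) = e^{-2it}(1 + 1/(x - 2it))`. -/
noncomputable def u1001 (x t : ℝ) : ℂ :=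
  Complex.exp (-2 * Complex.I * (t : ℂ)) * (1 + 1 / ((x : ℂ) - 2 * Complex.I * (t : ℂ)))

/-- `u_{1010}(x,t) = e^{-2it}(1 + (16it - 4)/(16t² + 4x² + 1))`. -/
noncomputable def u1010 (x t : ℝ) : ℂ :=
  Complex.exp (-2 * Complex.I * (t : ℂ)) *
    (1 + (16 * Complex.I * (t : ℂ) - 4) / (16 * (t : ℂ) ^ 2 + 4 * (x : ℂ) ^ 2 + 1))

/-- The sequence `(z, 0, κ₁, 0, κ₂, 0, …)`: entry `1` is `z`, entry `2j+1` is `κ_j` for `j ≥ 1`,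
even entries vanish.  Feeding it to Schur polynomials realises the generating function
`Σ_k θ_k(z) ε^k = exp(zε + Σ_{j≥1} κ_j ε^{2j+1})`. -/
noncomputable def thetaSeq (κ : ℕ → ℂ) (z : ℂ) : ℕ → ℂ := fun m =>
  if m = 1 then z else if m % 2 = 1 ∧ 3 ≤ m then κ ((m - 1) / 2) else 0

/-- The polynomials `θ_k(z)` of the Adler–Moser construction, as functions of `z`. -/
noncomputable def thetaFun (κ : ℕ → ℂ) (k : ℕ) : ℂ → ℂ := fun z => schurC (thetaSeq κ z) k

/-- `θ_k(z)` with integer index, with `θ_k ≡ 0` for `k < 0`. -/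
noncomputable def thetaFunZ (κ : ℕ → ℂ) (k : ℤ) : ℂ → ℂ := fun z =>
  if 0 ≤ k then thetaFun κ k.toNat z else 0

/-- `c_N = ∏_{j=1}^N (2j-1)!!`. -/
def cDF (N : ℕ) : ℕ := ∏ j ∈ Finset.range N, Nat.doubleFactorial (2 * j + 1)

/-- The Adler–Moser polynomial `Θ_N(z) = c_N det_{1≤i,j≤N}[θ_{2i-j}(z)]`, as a function of `z`. -/
noncomputable def adlerMoserFun (κ : ℕ → ℂ) (N : ℕ) (z : ℂ) : ℂ :=
  (cDF N : ℂ) * Matrix.det (Matrix.of fun i j : Fin N =>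
    thetaFunZ κ (2 * (i : ℤ) + 1 - (j : ℤ)) z)

/-- `θ_k` as an element of `Polynomial ℂ`. -/
noncomputable def thetaPoly (κ : ℕ → ℂ) (k : ℕ) : Polynomial ℂ :=
  schurA (fun m => if m = 1 then Polynomial.X
    else if m % 2 = 1 ∧ 3 ≤ m then Polynomial.C (κ ((m - 1) / 2)) else 0) k

/-- `θ_k` as a polynomial, with integer index and `θ_k ≡ 0` for `k < 0`. -/
noncomputable def thetaPolyZ (κ : ℕ → ℂ) (k : ℤ) : Polynomial ℂ :=
  if 0 ≤ k then thetaPoly κ k.toNat else 0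

/-- The Adler–Moser polynomial `Θ_N = c_N det[θ_{2i-j}]` as an element of `Polynomial ℂ`. -/
noncomputable def adlerMoserPoly (κ : ℕ → ℂ) (N : ℕ) : Polynomial ℂ :=
  Polynomial.C ((cDF N : ℂ)) * Matrix.det (Matrix.of fun i j : Fin N =>
    thetaPolyZ κ (2 * (i : ℤ) + 1 - (j : ℤ)))

/-- `δ_N = N₁ - N₂` if `N₁ ≥ N₂`, and `N₂ - N₁ - 1` otherwise. -/
def deltaIdx (N₁ N₂ : ℕ) : ℕ := if N₂ ≤ N₁ then N₁ - N₂ else N₂ - N₁ - 1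

/-- The large-parameter scaling `a_{2j+1} = κ_j A^{2j+1}` (with `a₁ = 0` and even entries `0`). -/
noncomputable def paramSeq (κ : ℕ → ℂ) (A : ℝ) : ℕ → ℂ := fun m =>
  if m % 2 = 1 ∧ 3 ≤ m then κ ((m - 1) / 2) * (A : ℂ) ^ m else 0

/-!
Write `u(x,t) = e^{-2it} w(x - 2it)` with `w z = 1 + 1/z`. Since `w` has real coefficients,
`conj (u(-x,t)) = e^{2it} w(-(x - 2it))`, so the phase factors cancel and the nonlocal NLS equation
becomes the complex ODE `2 (w + w') = w'' + 2 w(z)² w(-z)` at `z = x - 2it`, which for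
`w = 1 + 1/z` is the identity `2 + 2/z - 2/z² = 2/z³ + 2 (1 + 1/z)² (1 - 1/z)`.
-/

open Complex ComplexConjugate Filter Topology

noncomputable def nlsAnsatz (w : ℂ → ℂ) (x t : ℝ) : ℂ :=
  exp (-2 * I * t) * w (x - 2 * I * t)

lemma ofReal_sub_two_mul_I_mul_ne_zero {x t : ℝ} (h : (x, t) ≠ (0, 0)) :
    (x : ℂ) - 2 * I * t ≠ 0 := by
  intro h0
  have hre := congrArg re h0
  have him := congrArg im h0
  simp only [sub_re, ofReal_re, mul_re, re_ofNat, I_re, im_ofNat, I_im, ofReal_im, zero_re,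
    sub_im, ofReal_im, mul_im, zero_im] at hre him
  exact h (Prod.ext (by linarith) (by linarith))

section Ansatz

variable {w w' : ℂ → ℂ} {x t : ℝ}

lemma hasDerivAt_nlsAnsatz_time (hw : HasDerivAt w (w' (x - 2 * I * t)) (x - 2 * I * t)) :
    HasDerivAt (nlsAnsatz w x)
      (exp (-2 * I * t) * (-2 * I) * (w (x - 2 * I * t) + w' (x - 2 * I * t))) t := by
  have hphase : HasDerivAt (fun s : ℂ => -2 * I * s) (-2 * I) t := by
    simpa using (hasDerivAt_id (t : ℂ)).const_mul (-2 * I)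
  have hshift : HasDerivAt (fun s : ℂ => (x : ℂ) - 2 * I * s) (-2 * I) t := by
    simpa using ((hasDerivAt_id (t : ℂ)).const_mul (2 * I)).const_sub (x : ℂ)
  exact (hphase.cexp.mul (hw.comp (t : ℂ) hshift)).comp_ofReal.congr_deriv
    (by simp only [Function.comp_apply]; ring)

lemma hasDerivAt_nlsAnsatz_space {y : ℝ}
    (hw : HasDerivAt w (w' (y - 2 * I * t)) (y - 2 * I * t)) :
    HasDerivAt (fun y => nlsAnsatz w y t) (exp (-2 * I * t) * w' (y - 2 * I * t)) y :=
  ((hw.comp_sub_const (y : ℂ) (2 * I * t)).const_mul _).comp_ofReal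

lemma conj_nlsAnsatz_neg (hconj : ∀ z, w (conj z) = conj (w z)) :
    conj (nlsAnsatz w (-x) t) = exp (2 * I * t) * w (-(x - 2 * I * t)) := by
  rw [nlsAnsatz, map_mul, ← exp_conj, ← hconj]
  congr 2 <;> simp only [map_mul, map_sub, map_neg, map_ofNat, conj_I, conj_ofReal,
    ofReal_neg] <;> ring

theorem nlnls_nlsAnsatz {w'' : ℂ}
    (hw : ∀ᶠ z in 𝓝 ((x : ℂ) - 2 * I * t), HasDerivAt w (w' z) z)
    (hw' : HasDerivAt w' w'' (x - 2 * I * t)) (hconj : ∀ z, w (conj z) = conj (w z))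
    (hode : 2 * (w (x - 2 * I * t) + w' (x - 2 * I * t)) =
      w'' + 2 * w (x - 2 * I * t) ^ 2 * w (-(x - 2 * I * t))) :
    nlnls (nlsAnsatz w) x t := by
  have hspace : ∀ᶠ y : ℝ in 𝓝 x, HasDerivAt (fun y => nlsAnsatz w y t)
      (exp (-2 * I * t) * w' (y - 2 * I * t)) y := by
    have hcont : Continuous fun y : ℝ => (y : ℂ) - 2 * I * t := by fun_prop
    filter_upwards [hcont.continuousAt.eventually hw] with y hy
    exact hasDerivAt_nlsAnsatz_space hy
  have hspace2 : deriv (fun y => deriv (fun y => nlsAnsatz w y t) y) x =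
      exp (-2 * I * t) * w'' := by
    rw [EventuallyEq.deriv_eq (hspace.mono fun y hy => hy.deriv)]
    exact ((hw'.comp_sub_const (x : ℂ) (2 * I * t)).const_mul _).comp_ofReal.deriv
  have hphase : exp (-2 * I * t) * exp (2 * I * t) = 1 := by
    rw [← exp_add, ← exp_zero]
    ring_nf
  unfold nlnls
  rw [(hasDerivAt_nlsAnsatz_time hw.self_of_nhds).deriv, hspace2, conj_nlsAnsatz_neg hconj]
  unfold nlsAnsatz
  linear_combination (-2 * exp (-2 * I * t) * (w (x - 2 * I * t) + w' (x - 2 * I * t))) * I_sq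
    + exp (-2 * I * t) * hode
    - 2 * w (x - 2 * I * t) ^ 2 * w (-(x - 2 * I * t)) * exp (-2 * I * t) * hphase

end Ansatz

lemma hasDerivAt_one_add_one_div {z : ℂ} (hz : z ≠ 0) :
    HasDerivAt (fun z => 1 + 1 / z) (-1 / z ^ 2) z := by
  simpa [one_div, div_eq_mul_inv] using (hasDerivAt_inv hz).const_add 1

lemma hasDerivAt_neg_one_div_sq {z : ℂ} (hz : z ≠ 0) :
    HasDerivAt (fun z => -1 / z ^ 2) (2 / z ^ 3) z :=
  ((hasDerivAt_const z (-1 : ℂ)).div (hasDerivAt_pow 2 z) (pow_ne_zero 2 hz)).congr_deriv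
    (by field_simp; ring)

/-- `u_{1001}(x,t) = e^{-2it}(1 + 1/(x-2it))` solves the nonlocal NLS equation
at every real point `(x,t) ≠ (0,0)`. -/
theorem u1001_solves_nonlocal_NLS (x t : ℝ) (h : (x, t) ≠ (0, 0)) :
    nlnls u1001 x t := by
  have hζ := ofReal_sub_two_mul_I_mul_ne_zero h
  refine nlnls_nlsAnsatz (w' := fun z => -1 / z ^ 2)
    ((isOpen_ne.eventually_mem hζ).mono fun z hz => hasDerivAt_one_add_one_div hz)
    (hasDerivAt_neg_one_div_sq hζ) (fun z => by simp) ?_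
  generalize (x : ℂ) - 2 * I * t = ζ at hζ ⊢
  field_simp
  ring
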